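/- Let G be a torus acting linearly on a finite-dimensional complex vector space V. A nonzero vector v* ∈ V is G-polystable (its orbit G·v* is closed) if and only if the weight polytope N_G(v*) contains the origin in its relative/topological interior. -/

import Mathlib

/-!
Since the `w χ` are linearly independent, `t ↦ ∑ t^χ • w χ` is a closed embedding of the orbit
of `(1, …, 1)` in `ℂ^S` under `t ↦ (t^χ)_χ`, so only that orbit matters.

If `∑ c_χ χ = 0` with all `c_χ > 0`, then `∏ ‖x_χ‖^{c_χ} = 1` on the orbit, which keeps its
closure off the coordinate hyperplanes. Off them the orbit is cut out, in polar coordinates, by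
asking the log-moduli to lie in the range of the weight matrix (a closed subspace) and the phases
to lie in the image of the compact unit torus, so it is closed. If there is no such relation,
Stiemke's alternative gives `u` with `⟪χ, u⟫ ≥ 0` for all weights and `> 0` for one; along the
one-parameter subgroup `a ↦ (a^{u_j})_j` the orbit point converges as `a → 0⁺` to a point with a
vanishing coordinate, outside the orbit.

Finally, a strictly positive relation among finitely many points exists iff `0` lies in the
relative interior of their convex hull.
-/

open Set Filter Topology

section IntrinsicInterior

variable {E : Type*} [NormedAddCommGroup E] [NormedSpace ℝ E] {K : Set E} {x y : E}

theorem mem_intrinsicInterior_iff_exists_ball :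
    x ∈ intrinsicInterior ℝ K ↔
      x ∈ affineSpan ℝ K ∧ ∃ ε > 0, ∀ z ∈ affineSpan ℝ K, dist z x < ε → z ∈ K := by
  rw [mem_intrinsicInterior]
  constructor
  · rintro ⟨y, hy, rfl⟩
    obtain ⟨ε, hε, hball⟩ := Metric.mem_nhds_iff.1 (mem_interior_iff_mem_nhds.1 hy)
    exact ⟨y.2, ε, hε, fun z hz hzy => hball (show (⟨z, hz⟩ : affineSpan ℝ K) ∈ _ from hzy)⟩
  · rintro ⟨hx, ε, hε, hball⟩
    refine ⟨⟨x, hx⟩, mem_interior_iff_mem_nhds.2 (Metric.mem_nhds_iff.2 ?_), rfl⟩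
    exact ⟨ε, hε, fun z hz => hball z z.2 hz⟩

theorem Convex.openSegment_subset_intrinsicInterior (hK : Convex ℝ K) (hx : x ∈ K)
    (hy : y ∈ intrinsicInterior ℝ K) : openSegment ℝ x y ⊆ intrinsicInterior ℝ K := by
  rintro _ ⟨a, b, ha, hb, hab, rfl⟩
  obtain ⟨hyA, ε, hε, hball⟩ := mem_intrinsicInterior_iff_exists_ball.1 hy
  have hzK : a • x + b • y ∈ K := hK hx (intrinsicInterior_subset hy) ha.le hb.le hab
  refine mem_intrinsicInterior_iff_exists_ball.2
    ⟨subset_affineSpan ℝ K hzK, b * ε, mul_pos hb hε, fun z hz hdist => ?_⟩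
  -- move `y` by the rescaled displacement, so that `z` lies on the segment from `x` to it
  set y' := b⁻¹ • (z - (a • x + b • y)) + y
  have hy'A : y' ∈ affineSpan ℝ K :=
    AffineSubspace.vadd_mem_of_mem_direction
      (Submodule.smul_mem _ _ (AffineSubspace.vsub_mem_direction hz (subset_affineSpan ℝ K hzK)))
      hyA
  have hy'K : y' ∈ K := by
    refine hball y' hy'A ?_
    rw [dist_eq_norm, add_sub_cancel_right, norm_smul, norm_inv, Real.norm_of_nonneg hb.le,
      ← dist_eq_norm, inv_mul_lt_iff₀ hb]
    exact hdist
  convert hK hx hy'K ha.le hb.le hab using 1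
  simp only [y', smul_add, smul_smul, mul_inv_cancel₀ hb.ne', one_smul]
  abel

end IntrinsicInterior

section ConvexHull

variable {κ E : Type*} [Fintype κ] [AddCommGroup E] [Module ℝ E]

theorem mem_convexHull_range_iff {p : κ → E} {x : E} :
    x ∈ convexHull ℝ (range p) ↔
      ∃ w : κ → ℝ, (∀ k, 0 ≤ w k) ∧ ∑ k, w k = 1 ∧ ∑ k, w k • p k = x := by
  classical
  constructor
  · intro hx
    have hsub : range p ⊆ Fintype.linearCombination ℝ p '' stdSimplex ℝ κ := by
      rintro _ ⟨k, rfl⟩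
      exact ⟨Pi.single k 1, single_mem_stdSimplex ℝ k, by simp [Fintype.linearCombination_apply]⟩
    obtain ⟨w, ⟨hw0, hw1⟩, rfl⟩ :=
      convexHull_min hsub ((convex_stdSimplex ℝ κ).linear_image _) hx
    exact ⟨w, hw0, hw1, Fintype.linearCombination_apply ℝ p w⟩
  · rintro ⟨w, hw0, hw1, rfl⟩
    exact mem_convexHull_of_exists_fintype w p hw0 hw1 (fun k => mem_range_self k) rfl

end ConvexHull

section PositiveRelation

variable {κ E : Type*} [Fintype κ] [NormedAddCommGroup E] [NormedSpace ℝ E] {p : κ → E}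

theorem exists_pos_sum_smul_eq_zero_of_zero_mem_intrinsicInterior
    (h : (0 : E) ∈ intrinsicInterior ℝ (convexHull ℝ (range p))) :
    ∃ c : κ → ℝ, (∀ k, 0 < c k) ∧ ∑ k, c k • p k = 0 := by
  classical
  obtain ⟨h0A, ε, hε, hball⟩ := mem_intrinsicInterior_iff_exists_ball.1 h
  have hsingle : ∀ k₀, ∃ ν : κ → ℝ, (∀ k, 0 ≤ ν k) ∧ 0 < ν k₀ ∧ ∑ k, ν k • p k = 0 := by
    intro k₀
    have hpA : p k₀ ∈ affineSpan ℝ (convexHull ℝ (range p)) :=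
      subset_affineSpan ℝ _ (subset_convexHull ℝ _ (mem_range_self k₀))
    have hsmall : Tendsto (fun δ : ℝ => -δ • p k₀) (𝓝[>] 0) (𝓝 0) :=
      ((continuous_id.neg.smul continuous_const).tendsto' (0 : ℝ) (0 : E) (by simp)).mono_left
        nhdsWithin_le_nhds
    obtain ⟨δ, hδε, hδ⟩ :=
      ((hsmall.eventually (Metric.ball_mem_nhds 0 hε)).and self_mem_nhdsWithin).exists
    have hδK : -δ • p k₀ ∈ convexHull ℝ (range p) := by
      refine hball _ ?_ hδε
      simpa using AffineSubspace.smul_vsub_vadd_mem _ (-δ) hpA h0A h0A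
    obtain ⟨w, hw0, -, hw⟩ := mem_convexHull_range_iff.1 hδK
    refine ⟨w + Pi.single k₀ δ, fun k => add_nonneg (hw0 k) ?_, ?_, ?_⟩
    · rcases eq_or_ne k k₀ with rfl | hk
      · simpa using le_of_lt hδ
      · simp [hk]
    · simpa using add_pos_of_nonneg_of_pos (hw0 k₀) hδ
    · simp [add_smul, Finset.sum_add_distrib, hw, Pi.single_apply]
  choose ν hν0 hνpos hνsum using hsingle
  refine ⟨∑ k₀, ν k₀, fun k => ?_, ?_⟩
  · rw [Finset.sum_apply]
    exact Finset.sum_pos' (fun k₀ _ => hν0 k₀ k) ⟨k, Finset.mem_univ k, hνpos k⟩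
  · simp only [Finset.sum_apply, Finset.sum_smul]
    rw [Finset.sum_comm]
    simp [hνsum]

theorem zero_mem_intrinsicInterior_of_pos_sum_smul_eq_zero [FiniteDimensional ℝ E] [Nonempty κ]
    {c : κ → ℝ} (hc : ∀ k, 0 < c k) (hcp : ∑ k, c k • p k = 0) :
    (0 : E) ∈ intrinsicInterior ℝ (convexHull ℝ (range p)) := by
  have hK : Convex ℝ (convexHull ℝ (range p)) := convex_convexHull ℝ _
  obtain ⟨q, hq⟩ := (range_nonempty p).convexHull.intrinsicInterior hK
  obtain ⟨μ, hμ0, hμ1, rfl⟩ := mem_convexHull_range_iff.1 (intrinsicInterior_subset hq)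
  obtain ⟨k₁, -, hk₁⟩ := Finset.exists_min_image Finset.univ c Finset.univ_nonempty
  set s := ∑ k, c k
  have hs : 0 < s := Finset.sum_pos (fun k _ => hc k) Finset.univ_nonempty
  set t := c k₁ / s
  have ht : 0 < t := div_pos (hc k₁) hs
  -- `-t • q` is again a convex combination, as `0 = ∑ c k • p k` absorbs the negative weights
  have hneg : -t • ∑ k, μ k • p k ∈ convexHull ℝ (range p) := by
    refine mem_convexHull_range_iff.2 ⟨fun k => (1 + t) / s * c k - t * μ k, fun k => ?_, ?_, ?_⟩
    · have hμle : μ k ≤ 1 := hμ1 ▸ Finset.single_le_sum (fun k _ => hμ0 k) (Finset.mem_univ k)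
      have htc : t ≤ c k / s := div_le_div_of_nonneg_right (hk₁ k (Finset.mem_univ k)) hs.le
      have : c k / s ≤ (1 + t) / s * c k := by
        rw [div_mul_eq_mul_div, mul_comm]
        exact div_le_div_of_nonneg_right (le_mul_of_one_le_right (hc k).le (by linarith)) hs.le
      nlinarith [mul_le_of_le_one_right ht.le hμle]
    · rw [Finset.sum_sub_distrib, ← Finset.mul_sum, ← Finset.mul_sum, hμ1]
      field_simp
      ring
    · simp only [sub_smul, Finset.sum_sub_distrib, mul_smul, ← Finset.smul_sum, hcp, smul_zero,
        zero_sub, neg_smul]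
  refine hK.openSegment_subset_intrinsicInterior hneg hq
    ⟨1 / (1 + t), t / (1 + t), by positivity, by positivity, by field_simp, ?_⟩
  rw [smul_smul, ← add_smul]
  field_simp
  simp

theorem zero_mem_intrinsicInterior_convexHull_iff [FiniteDimensional ℝ E] [Nonempty κ] :
    (0 : E) ∈ intrinsicInterior ℝ (convexHull ℝ (range p)) ↔
      ∃ c : κ → ℝ, (∀ k, 0 < c k) ∧ ∑ k, c k • p k = 0 :=
  ⟨exists_pos_sum_smul_eq_zero_of_zero_mem_intrinsicInterior,
    fun ⟨_, hc, hcp⟩ => zero_mem_intrinsicInterior_of_pos_sum_smul_eq_zero hc hcp⟩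

end PositiveRelation

/-- Stiemke's theorem of the alternative. -/
theorem exists_pos_sum_smul_eq_zero_or_exists_dual {κ E : Type*} [Fintype κ] [AddCommGroup E]
    [Module ℝ E] (p : κ → E) :
    (∃ c : κ → ℝ, (∀ k, 0 < c k) ∧ ∑ k, c k • p k = 0) ∨
      ∃ ℓ : Module.Dual ℝ E, (∀ k, 0 ≤ ℓ (p k)) ∧ ∃ k, 0 < ℓ (p k) := by
  classical
  refine or_iff_not_imp_right.2 fun hno => ?_
  push Not at hno
  let M : Module.Dual ℝ E →ₗ[ℝ] κ → ℝ := LinearMap.pi fun k => Module.Dual.eval ℝ E (p k)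
  have hM : ∀ ℓ k, M ℓ k = ℓ (p k) := fun _ _ => rfl
  have hdisj : Disjoint (stdSimplex ℝ κ) (LinearMap.range M : Set (κ → ℝ)) := by
    refine Set.disjoint_left.2 ?_
    rintro _ ⟨hw0, hw1⟩ ⟨ℓ, rfl⟩
    have : ∑ k, M ℓ k ≤ 0 := Finset.sum_nonpos fun k _ => hno ℓ hw0 k
    linarith
  obtain ⟨f, u, v, hfu, huv, hvf⟩ := geometric_hahn_banach_compact_closed
    (convex_stdSimplex ℝ κ) (isCompact_stdSimplex ℝ κ) (LinearMap.range M).convex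
    (Submodule.closed_of_finiteDimensional _) hdisj
  have hv : v < 0 := by simpa using hvf 0 (zero_mem _)
  -- a linear functional bounded below on a subspace vanishes there
  have hfM : ∀ ℓ, f (M ℓ) = 0 := by
    intro ℓ
    by_contra hne
    have := hvf (M ((v / f (M ℓ)) • ℓ)) ⟨_, rfl⟩
    rw [map_smul, map_smul, smul_eq_mul, div_mul_cancel₀ _ hne] at this
    exact lt_irrefl _ this
  refine ⟨fun k => -f fun j => if k = j then 1 else 0, fun k => neg_pos.2
    ((hfu _ (ite_eq_mem_stdSimplex ℝ k)).trans (huv.trans hv)), ?_⟩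
  rw [← Module.forall_dual_apply_eq_zero_iff ℝ]
  intro ℓ
  have h := hfM ℓ
  rw [pi_eq_sum_univ (M ℓ), map_sum] at h
  simpa [hM, mul_comm] using h

namespace TorusAction

variable {ι κ : Type*} [Fintype ι] (χ : κ → ι → ℤ)

noncomputable def monomials (t : ι → ℂ) : κ → ℂ := fun k => ∏ j, t j ^ χ k j

/-- The orbit of `(1, …, 1)` under the torus `(ℂˣ)^ι` acting on `ℂ^κ` with weights `χ k`. -/
def orbit : Set (κ → ℂ) := range fun t : ι → ℂˣ => monomials χ fun j => t j

theorem monomials_mul (s t : ι → ℂ) : monomials χ (s * t) = monomials χ s * monomials χ t := by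
  ext k
  simp [monomials, mul_zpow, Finset.prod_mul_distrib]

theorem monomials_div (s t : ι → ℂ) : monomials χ (s / t) = monomials χ s / monomials χ t := by
  ext k
  simp [monomials, div_zpow, Finset.prod_div_distrib]

theorem norm_monomials (t : ι → ℂ) (k : κ) : ‖monomials χ t k‖ = ∏ j, ‖t j‖ ^ χ k j := by
  simp [monomials, norm_zpow]

theorem monomials_ofReal_norm (t : ι → ℂ) :
    monomials χ (fun j => (‖t j‖ : ℂ)) = fun k => (‖monomials χ t k‖ : ℂ) := by
  ext k
  simp [monomials]

theorem monomials_exp (z : ι → ℂ) :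
    monomials χ (fun j => Complex.exp (z j)) = fun k => Complex.exp (∑ j, χ k j * z j) := by
  ext k
  simp [monomials, Complex.exp_sum, ← Complex.exp_int_mul]

theorem monomials_ofReal_rpow {a : ℝ} (ha : 0 < a) (u : ι → ℝ) :
    monomials χ (fun j => ((a ^ u j : ℝ) : ℂ)) = fun k => ((a ^ ∑ j, χ k j * u j : ℝ) : ℂ) := by
  ext k
  have h : ∀ j, (a ^ u j) ^ χ k j = a ^ (χ k j * u j) := fun j => by
    rw [← Real.rpow_intCast, ← Real.rpow_mul ha.le, mul_comm]
  rw [Real.rpow_sum_of_pos ha, Complex.ofReal_prod]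
  simp [monomials, ← h]

theorem monomials_ne_zero {t : ι → ℂ} (ht : ∀ j, t j ≠ 0) (k : κ) : monomials χ t k ≠ 0 :=
  Finset.prod_ne_zero_iff.2 fun j _ => zpow_ne_zero _ (ht j)

theorem log_norm_monomials {t : ι → ℂ} (ht : ∀ j, t j ≠ 0) (k : κ) :
    Real.log ‖monomials χ t k‖ = ∑ j, χ k j * Real.log ‖t j‖ := by
  rw [norm_monomials, Real.log_prod fun j _ => zpow_ne_zero _ (norm_ne_zero_iff.2 (ht j))]
  simp [Real.log_zpow]

theorem prod_norm_monomials_rpow [Fintype κ] {t : ι → ℂ} (ht : ∀ j, t j ≠ 0) (c : κ → ℝ) :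
    ∏ k, ‖monomials χ t k‖ ^ c k = ∏ j, ‖t j‖ ^ ∑ k, c k * χ k j := by
  have hpos : ∀ j, 0 < ‖t j‖ := fun j => norm_pos_iff.2 (ht j)
  have h : ∀ k j, (‖t j‖ ^ χ k j) ^ c k = ‖t j‖ ^ (c k * χ k j) := fun k j => by
    rw [← Real.rpow_intCast, ← Real.rpow_mul (hpos j).le, mul_comm]
  simp_rw [norm_monomials, ← Real.finsetProd_rpow _ _ fun j _ => zpow_nonneg (hpos j).le _, h,
    Real.rpow_sum_of_pos (hpos _)]
  exact Finset.prod_comm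

theorem continuousOn_monomials : ContinuousOn (monomials χ) {t : ι → ℂ | ∀ j, t j ≠ 0} :=
  continuousOn_pi.2 fun _ => continuousOn_finsetProd _ fun j _ =>
    (continuous_apply j).continuousOn.zpow₀ _ fun _ ht => Or.inl (ht j)

theorem mem_orbit_iff {x : κ → ℂ} (hx : ∀ k, x k ≠ 0) :
    x ∈ orbit χ ↔
      (fun k => Real.log ‖x k‖) ∈ range (Matrix.of fun k j => (χ k j : ℝ)).mulVec ∧
        (fun k => x k / ‖x k‖) ∈ monomials χ '' univ.pi fun _ => Metric.sphere 0 1 := by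
  constructor
  · rintro ⟨t, rfl⟩
    have ht : ∀ j, (t j : ℂ) ≠ 0 := fun j => (t j).ne_zero
    refine ⟨⟨fun j => Real.log ‖(t j : ℂ)‖, funext fun k => ?_⟩,
      fun j => t j / ‖(t j : ℂ)‖, fun j _ => ?_, ?_⟩
    · simp [log_norm_monomials χ ht, Matrix.mulVec, dotProduct]
    · simp [ht j]
    · change monomials χ ((fun j => (t j : ℂ)) / fun j => (‖(t j : ℂ)‖ : ℂ)) = _
      rw [monomials_div, monomials_ofReal_norm]
      rfl
  · rintro ⟨⟨r, hr⟩, ζ, hζ, hζx⟩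
    have hζ0 : ∀ j, ζ j ≠ 0 := fun j h => by simpa [h] using hζ j trivial
    refine ⟨fun j => Units.mk0 (Complex.exp (r j) * ζ j)
      (mul_ne_zero (Complex.exp_ne_zero _) (hζ0 j)), ?_⟩
    change monomials χ ((fun j => Complex.exp (r j)) * ζ) = x
    rw [monomials_mul, monomials_exp, hζx]
    ext k
    have hrk : ∑ j, (χ k j : ℂ) * r j = (Real.log ‖x k‖ : ℂ) := by
      rw [← congrFun hr k]
      simp [Matrix.mulVec, dotProduct]
    rw [Pi.mul_apply, hrk, ← Complex.ofReal_exp, Real.exp_log (norm_pos_iff.2 (hx k)),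
      mul_div_cancel₀ _ (Complex.ofReal_ne_zero.2 (norm_ne_zero_iff.2 (hx k)))]

theorem orbit_subset_prod_norm_rpow_eq_one [Fintype κ] {c : κ → ℝ}
    (hrel : ∑ k, c k • (fun j => (χ k j : ℝ)) = 0) :
    orbit χ ⊆ {x | ∏ k, ‖x k‖ ^ c k = 1} := by
  rintro _ ⟨t, rfl⟩
  have hrel' : ∀ j, ∑ k, c k * χ k j = 0 := fun j => by simpa using congrFun hrel j
  simp [prod_norm_monomials_rpow χ (fun j => (t j).ne_zero), hrel']

theorem ne_zero_of_prod_norm_rpow_eq_one [Fintype κ] {c : κ → ℝ} (hc : ∀ k, 0 < c k)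
    {x : κ → ℂ} (hx : ∏ k, ‖x k‖ ^ c k = 1) (k : κ) : x k ≠ 0 := by
  intro hk
  have : ∏ k, ‖x k‖ ^ c k = 0 :=
    Finset.prod_eq_zero (Finset.mem_univ k) (by simp [hk, (hc k).ne'])
  simp_all

theorem orbit_eq_inter [Fintype κ] {c : κ → ℝ} (hc : ∀ k, 0 < c k)
    (hrel : ∑ k, c k • (fun j => (χ k j : ℝ)) = 0) :
    orbit χ = {x : κ → ℂ | ∏ k, ‖x k‖ ^ c k = 1} ∩
      (fun x k => Real.log ‖x k‖) ⁻¹' range (Matrix.of fun k j => (χ k j : ℝ)).mulVec ∩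
      (fun x k => x k / ‖x k‖) ⁻¹' (monomials χ '' univ.pi fun _ => Metric.sphere 0 1) := by
  ext x
  constructor
  · intro hx
    have hxZ := orbit_subset_prod_norm_rpow_eq_one χ hrel hx
    obtain ⟨hmod, hph⟩ := (mem_orbit_iff χ (ne_zero_of_prod_norm_rpow_eq_one hc hxZ)).1 hx
    exact ⟨⟨hxZ, hmod⟩, hph⟩
  · rintro ⟨⟨hxZ, hmod⟩, hph⟩
    exact (mem_orbit_iff χ (ne_zero_of_prod_norm_rpow_eq_one hc hxZ)).2 ⟨hmod, hph⟩

theorem isClosed_orbit_of_pos_relation [Fintype κ] {c : κ → ℝ} (hc : ∀ k, 0 < c k)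
    (hrel : ∑ k, c k • (fun j => (χ k j : ℝ)) = 0) : IsClosed (orbit χ) := by
  set Z := {x : κ → ℂ | ∏ k, ‖x k‖ ^ c k = 1}
  have hZ0 : ∀ x ∈ Z, ∀ k, x k ≠ 0 := fun _ hx => ne_zero_of_prod_norm_rpow_eq_one hc hx
  have hZ : IsClosed Z := isClosed_eq (continuous_finsetProd _ fun k _ =>
    (continuous_norm.comp (continuous_apply k)).rpow_const fun _ => Or.inr (hc k).le)
    continuous_const
  have hlog : ContinuousOn (fun x : κ → ℂ => fun k => Real.log ‖x k‖) Z :=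
    continuousOn_pi.2 fun k => (continuous_norm.comp (continuous_apply k)).continuousOn.log
      fun x hx => norm_ne_zero_iff.2 (hZ0 x hx k)
  have hphase : ContinuousOn (fun x : κ → ℂ => fun k => x k / ‖x k‖) Z :=
    continuousOn_pi.2 fun k => (continuous_apply k).continuousOn.div
      (Complex.continuous_ofReal.comp (continuous_norm.comp (continuous_apply k))).continuousOn
      fun x hx => Complex.ofReal_ne_zero.2 (norm_ne_zero_iff.2 (hZ0 x hx k))
  have hrange : IsClosed (range (Matrix.of fun k j => (χ k j : ℝ)).mulVec) :=
    (LinearMap.range (Matrix.of fun k j => (χ k j : ℝ)).mulVecLin).closed_of_finiteDimensional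
  have htorus : IsClosed (monomials χ '' univ.pi fun _ => Metric.sphere (0 : ℂ) 1) :=
    ((isCompact_univ_pi fun _ => isCompact_sphere 0 1).image_of_continuousOn
      ((continuousOn_monomials χ).mono fun ζ hζ j h => by simpa [h] using hζ j trivial)).isClosed
  rw [orbit_eq_inter χ hc hrel]
  exact (hphase.mono inter_subset_left).preimage_isClosed_of_isClosed
    (hlog.preimage_isClosed_of_isClosed hZ hrange) htorus

theorem not_isClosed_orbit {u : ι → ℝ} (hu : ∀ k, 0 ≤ ∑ j, χ k j * u j) {k₀ : κ}
    (hk₀ : 0 < ∑ j, χ k₀ j * u j) : ¬IsClosed (orbit χ) := by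
  intro hcl
  set d := fun k => ∑ j, (χ k j : ℝ) * u j
  have hmem : ∀ a : ℝ, 0 < a → (fun k => ((a ^ d k : ℝ) : ℂ)) ∈ orbit χ := fun a ha =>
    ⟨fun j => Units.mk0 ((a ^ u j : ℝ) : ℂ)
      (Complex.ofReal_ne_zero.2 (Real.rpow_pos_of_pos ha _).ne'), monomials_ofReal_rpow χ ha u⟩
  have hlim : Tendsto (fun a : ℝ => fun k => ((a ^ d k : ℝ) : ℂ)) (𝓝[>] 0)
      (𝓝 fun k => (((0 : ℝ) ^ d k : ℝ) : ℂ)) :=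
    tendsto_pi_nhds.2 fun k => ((Complex.continuous_ofReal.comp
      (Real.continuous_rpow_const (hu k))).tendsto 0).mono_left nhdsWithin_le_nhds
  obtain ⟨t, ht⟩ := hcl.mem_of_tendsto hlim (eventually_nhdsWithin_of_forall hmem)
  have := monomials_ne_zero χ (fun j => (t j).ne_zero) k₀
  simp only [ht, d, Real.zero_rpow hk₀.ne'] at this
  simp at this

theorem isClosed_orbit_iff [Fintype κ] :
    IsClosed (orbit χ) ↔ ∃ c : κ → ℝ, (∀ k, 0 < c k) ∧ ∑ k, c k • (fun j => (χ k j : ℝ)) = 0 := by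
  classical
  refine ⟨fun hcl => ?_, fun ⟨c, hc, hrel⟩ => isClosed_orbit_of_pos_relation χ hc hrel⟩
  refine (exists_pos_sum_smul_eq_zero_or_exists_dual _).resolve_right ?_
  rintro ⟨ℓ, hℓ, k₀, hk₀⟩
  have hℓχ : ∀ k, ℓ (fun j => (χ k j : ℝ)) =
      ∑ j, χ k j * ℓ (fun j' => if j = j' then 1 else 0) := fun k => by
    rw [LinearMap.pi_apply_eq_sum_univ]
    simp
  exact not_isClosed_orbit χ (fun k => hℓχ k ▸ hℓ k) (hℓχ k₀ ▸ hk₀) hcl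

end TorusAction

theorem torus_polystable_iff_zero_mem_interior_weight_polytope_general
    (N : ℕ) (V : Type*) [NormedAddCommGroup V] [NormedSpace ℂ V]
    (S : Finset (Fin (N + 1) → ℤ)) (w : (Fin (N + 1) → ℤ) → V)
    (hindep : LinearIndependent ℂ (fun χ : S => w (χ : Fin (N + 1) → ℤ)))
    (hne : S.Nonempty) :
    IsClosed {v : V | ∃ t : Fin (N + 1) → ℂˣ,
        v = ∑ χ ∈ S, (((∏ j, t j ^ χ j) : ℂˣ) : ℂ) • w χ} ↔
      (0 : Fin (N + 1) → ℝ) ∈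
        intrinsicInterior ℝ
          (convexHull ℝ ((fun χ : Fin (N + 1) → ℤ => fun i => (χ i : ℝ)) '' S)) := by
  have : Nonempty S := hne.to_subtype
  have horbit : {v : V | ∃ t : Fin (N + 1) → ℂˣ,
      v = ∑ χ ∈ S, (((∏ j, t j ^ χ j) : ℂˣ) : ℂ) • w χ} =
      Fintype.linearCombination ℂ (fun χ : S => w χ) ''
        TorusAction.orbit fun χ : S => (χ : Fin (N + 1) → ℤ) := by
    ext v
    simp only [TorusAction.orbit, TorusAction.monomials, mem_image, mem_range, mem_ofPred_eq,
      exists_exists_eq_and, Fintype.linearCombination_apply, Units.coe_prod,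
      Units.val_zpow_eq_zpow_val, eq_comm (b := v)]
    exact exists_congr fun t => by rw [← Finset.sum_coe_sort]
  rw [horbit, ← (LinearMap.isClosedEmbedding_of_injective (LinearMap.ker_eq_bot.2
    hindep.fintypeLinearCombination_injective)).isClosed_iff_image_isClosed,
    TorusAction.isClosed_orbit_iff, image_eq_range, zero_mem_intrinsicInterior_convexHull_iff]
  exact Iff.rfl

/-- numerical criterion, polystable case: in the same setting as the torus
numerical criterion, the nonzero vector v* = Σ_{χ ∈ S} w_χ is G-polystable, i.e. its orbit
G·v* is closed, iff the weight polytope N_G(v*) contains the origin in its relative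
(intrinsic) interior. -/
theorem torus_polystable_iff_zero_mem_interior_weight_polytope
    (N : ℕ) (V : Type*) [NormedAddCommGroup V] [NormedSpace ℂ V] [FiniteDimensional ℂ V]
    (S : Finset (Fin (N + 1) → ℤ)) (w : (Fin (N + 1) → ℤ) → V)
    (hindep : LinearIndependent ℂ (fun χ : S => w (χ : Fin (N + 1) → ℤ)))
    (hne : S.Nonempty) :
    IsClosed {v : V | ∃ t : Fin (N + 1) → ℂˣ,
        v = ∑ χ ∈ S, (((∏ j, t j ^ χ j) : ℂˣ) : ℂ) • w χ} ↔
      (0 : Fin (N + 1) → ℝ) ∈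
        intrinsicInterior ℝ
          (convexHull ℝ ((fun χ : Fin (N + 1) → ℤ => fun i => (χ i : ℝ)) '' S)) :=
  torus_polystable_iff_zero_mem_interior_weight_polytope_general N V S w hindep hne
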